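/- arXiv:2401.14871 — 2 statements merged into one kernel-verified Lean document; each statement's English description precedes it below -/
import Mathlib

section
/- Convexity of the reparameterized LQR problem: the feasible set ℒ is a convex subset of ℝ^{(m+n)×n} × ℝ^{n×n}, and the function f(L, Σ) = Tr(QΣ) + Tr(LΣ⁻¹LᵀŪ₀ᵀRŪ₀) is convex on ℒ. -/
open Matrix

noncomputable section

/-- Euclidean norm of a vector. -/
def eNorm {ι : Type*} [Fintype ι] (v : ι → ℝ) : ℝ :=
  Real.sqrt (∑ i, v i ^ 2)

/-- Frobenius norm of a matrix. -/
def frobNorm {ι κ : Type*} [Fintype ι] [Fintype κ] (A : Matrix ι κ ℝ) : ℝ :=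
  Real.sqrt (∑ i, ∑ j, A i j ^ 2)

/-- Spectral (operator 2-) norm of a matrix. -/
def spNorm {ι κ : Type*} [Fintype ι] [Fintype κ] (A : Matrix ι κ ℝ) : ℝ :=
  sSup {r : ℝ | ∃ v : κ → ℝ, eNorm v = 1 ∧ r = eNorm (A.mulVec v)}

/-- Smallest singular value of a matrix `A`, i.e. the square root of the smallest
eigenvalue of `A * Aᵀ`, expressed as `inf_{‖u‖ = 1} ‖Aᵀ u‖`. -/
def sigMin {ι κ : Type*} [Fintype ι] [Fintype κ] (A : Matrix ι κ ℝ) : ℝ :=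
  sInf {r : ℝ | ∃ u : ι → ℝ, eNorm u = 1 ∧ r = eNorm (A.vecMul u)}

/-- `ρ(A) < 1` : the spectral radius of the real square matrix `A` (i.e. the
largest modulus of a complex eigenvalue) is smaller than one. -/
def specLt1 {ι : Type*} [Fintype ι] [DecidableEq ι] (A : Matrix ι ι ℝ) : Prop :=
  spectralRadius ℂ (A.map Complex.ofReal) < 1

/-- Right inverse `M† = Mᵀ (M Mᵀ)⁻¹` of a full-row-rank matrix. -/
def pinv {ι κ : Type*} [Fintype ι] [Fintype κ] [DecidableEq ι] (A : Matrix ι κ ℝ) :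
    Matrix κ ι ℝ :=
  Aᵀ * (A * Aᵀ)⁻¹

/-- Orthogonal projection `Π_A = I - A† A` onto the nullspace of `A`. -/
def projNull {ι κ : Type*} [Fintype ι] [Fintype κ] [DecidableEq ι] [DecidableEq κ]
    (A : Matrix ι κ ℝ) : Matrix κ κ ℝ :=
  1 - pinv A * A

/-- `Σ(M) = ∑_{i≥0} Mⁱ (Mᵀ)ⁱ`, the unique solution of the discrete Lyapunov
equation `Σ = I + M Σ Mᵀ` when `ρ(M) < 1`. -/
def lyap {k : ℕ} (M : Matrix (Fin k) (Fin k) ℝ) : Matrix (Fin k) (Fin k) ℝ :=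
  ∑' i : ℕ, M ^ i * (Mᵀ) ^ i

variable {n m t : ℕ}

/-- Stacked data matrix `D₀ = [U₀; X₀]`. -/
def Dmat (U0 : Matrix (Fin m) (Fin t) ℝ) (X0 : Matrix (Fin n) (Fin t) ℝ) :
    Matrix (Fin m ⊕ Fin n) (Fin t) ℝ :=
  Matrix.fromRows U0 X0

/-- `Ū₀ = (1/t) U₀ D₀ᵀ`. -/
def Ubar (U0 : Matrix (Fin m) (Fin t) ℝ) (X0 : Matrix (Fin n) (Fin t) ℝ) :
    Matrix (Fin m) (Fin m ⊕ Fin n) ℝ :=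
  (t : ℝ)⁻¹ • (U0 * (Dmat U0 X0)ᵀ)

/-- `X̄₀ = (1/t) X₀ D₀ᵀ`. -/
def Xbar0 (U0 : Matrix (Fin m) (Fin t) ℝ) (X0 : Matrix (Fin n) (Fin t) ℝ) :
    Matrix (Fin n) (Fin m ⊕ Fin n) ℝ :=
  (t : ℝ)⁻¹ • (X0 * (Dmat U0 X0)ᵀ)

/-- `X̄₁ = (1/t) X₁ D₀ᵀ`. -/
def Xbar1 (U0 : Matrix (Fin m) (Fin t) ℝ) (X0 X1 : Matrix (Fin n) (Fin t) ℝ) :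
    Matrix (Fin n) (Fin m ⊕ Fin n) ℝ :=
  (t : ℝ)⁻¹ • (X1 * (Dmat U0 X0)ᵀ)

/-- Sample covariance `Φ = (1/t) D₀ D₀ᵀ`. -/
def Phi (U0 : Matrix (Fin m) (Fin t) ℝ) (X0 : Matrix (Fin n) (Fin t) ℝ) :
    Matrix (Fin m ⊕ Fin n) (Fin m ⊕ Fin n) ℝ :=
  (t : ℝ)⁻¹ • (Dmat U0 X0 * (Dmat U0 X0)ᵀ)

/-- The feasible set `S = {V : X̄₀ V = I, ρ(X̄₁ V) < 1}`. -/
def feasSet (U0 : Matrix (Fin m) (Fin t) ℝ) (X0 X1 : Matrix (Fin n) (Fin t) ℝ) :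
    Set (Matrix (Fin m ⊕ Fin n) (Fin n) ℝ) :=
  {V | Xbar0 U0 X0 * V = 1 ∧ specLt1 (Xbar1 U0 X0 X1 * V)}

/-- The closed-loop Lyapunov solution `Σ_V`, i.e. the unique solution of
`Σ_V = I + (X̄₁ V) Σ_V (X̄₁ V)ᵀ` when `V ∈ S`. -/
def SigV (U0 : Matrix (Fin m) (Fin t) ℝ) (X0 X1 : Matrix (Fin n) (Fin t) ℝ)
    (V : Matrix (Fin m ⊕ Fin n) (Fin n) ℝ) : Matrix (Fin n) (Fin n) ℝ :=
  lyap (Xbar1 U0 X0 X1 * V)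

/-- `P_V`, the unique solution of `P = Q + Vᵀ Ū₀ᵀ R Ū₀ V + (X̄₁V)ᵀ P (X̄₁V)`
when `V ∈ S`, given by its convergent series. -/
def PV (U0 : Matrix (Fin m) (Fin t) ℝ) (X0 X1 : Matrix (Fin n) (Fin t) ℝ)
    (Q : Matrix (Fin n) (Fin n) ℝ) (R : Matrix (Fin m) (Fin m) ℝ)
    (V : Matrix (Fin m ⊕ Fin n) (Fin n) ℝ) : Matrix (Fin n) (Fin n) ℝ :=
  ∑' i : ℕ, ((Xbar1 U0 X0 X1 * V)ᵀ) ^ i *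
      (Q + Vᵀ * (Ubar U0 X0)ᵀ * R * Ubar U0 X0 * V) * (Xbar1 U0 X0 X1 * V) ^ i

/-- The covariance-parameterized LQR cost `J(V)`. -/
def Jcost (U0 : Matrix (Fin m) (Fin t) ℝ) (X0 X1 : Matrix (Fin n) (Fin t) ℝ)
    (Q : Matrix (Fin n) (Fin n) ℝ) (R : Matrix (Fin m) (Fin m) ℝ)
    (V : Matrix (Fin m ⊕ Fin n) (Fin n) ℝ) : ℝ :=
  Matrix.trace ((Q + Vᵀ * (Ubar U0 X0)ᵀ * R * Ubar U0 X0 * V) * SigV U0 X0 X1 V)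

/-- `J* = inf_{V ∈ S} J(V)`. -/
def Jstar (U0 : Matrix (Fin m) (Fin t) ℝ) (X0 X1 : Matrix (Fin n) (Fin t) ℝ)
    (Q : Matrix (Fin n) (Fin n) ℝ) (R : Matrix (Fin m) (Fin m) ℝ) : ℝ :=
  sInf (Jcost U0 X0 X1 Q R '' feasSet U0 X0 X1)

/-- Sublevel set `S(a) = {V ∈ S : J(V) ≤ a}`. -/
def subLevel (U0 : Matrix (Fin m) (Fin t) ℝ) (X0 X1 : Matrix (Fin n) (Fin t) ℝ)
    (Q : Matrix (Fin n) (Fin n) ℝ) (R : Matrix (Fin m) (Fin m) ℝ) (a : ℝ) :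
    Set (Matrix (Fin m ⊕ Fin n) (Fin n) ℝ) :=
  {V | V ∈ feasSet U0 X0 X1 ∧ Jcost U0 X0 X1 Q R V ≤ a}

/-- The gradient `∇J(V) = 2 (Ū₀ᵀ R Ū₀ + X̄₁ᵀ P_V X̄₁) V Σ_V`. -/
def gradJ (U0 : Matrix (Fin m) (Fin t) ℝ) (X0 X1 : Matrix (Fin n) (Fin t) ℝ)
    (Q : Matrix (Fin n) (Fin n) ℝ) (R : Matrix (Fin m) (Fin m) ℝ)
    (V : Matrix (Fin m ⊕ Fin n) (Fin n) ℝ) : Matrix (Fin m ⊕ Fin n) (Fin n) ℝ :=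
  (2 : ℝ) • (((Ubar U0 X0)ᵀ * R * Ubar U0 X0 +
      (Xbar1 U0 X0 X1)ᵀ * PV U0 X0 X1 Q R V * Xbar1 U0 X0 X1) * V * SigV U0 X0 X1 V)

/-- `ξ(a) = ‖Ū₀‖² ‖R‖ + ‖X̄₁‖² a`. -/
def xiC (U0 : Matrix (Fin m) (Fin t) ℝ) (X0 X1 : Matrix (Fin n) (Fin t) ℝ)
    (R : Matrix (Fin m) (Fin m) ℝ) (a : ℝ) : ℝ :=
  spNorm (Ubar U0 X0) ^ 2 * spNorm R + spNorm (Xbar1 U0 X0 X1) ^ 2 * a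

/-- Smoothness constant `l(a)`. -/
def lC (U0 : Matrix (Fin m) (Fin t) ℝ) (X0 X1 : Matrix (Fin n) (Fin t) ℝ)
    (Q : Matrix (Fin n) (Fin n) ℝ) (R : Matrix (Fin m) (Fin m) ℝ) (a : ℝ) : ℝ :=
  4 * a ^ 2 * (xiC U0 X0 X1 R a + a - sigMin Q) * frobNorm (Xbar1 U0 X0 X1) ^ 2 / sigMin Q ^ 2 +
    2 * xiC U0 X0 X1 R a * a / sigMin Q

/-- Gradient-dominance constant `μ(a) = 4a²/(σ̲(Q)^{3/2} σ̲(R)^{1/2} σ̲(Ū₀))`. -/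
def muC (U0 : Matrix (Fin m) (Fin t) ℝ) (X0 : Matrix (Fin n) (Fin t) ℝ)
    (Q : Matrix (Fin n) (Fin n) ℝ) (R : Matrix (Fin m) (Fin m) ℝ) (a : ℝ) : ℝ :=
  4 * a ^ 2 / (Real.sqrt (sigMin Q) ^ 3 * Real.sqrt (sigMin R) * sigMin (Ubar U0 X0))

/-- Reparameterized cost `f(L, Σ) = Tr(QΣ) + Tr(L Σ⁻¹ Lᵀ Ū₀ᵀ R Ū₀)`. -/
def fRep (U0 : Matrix (Fin m) (Fin t) ℝ) (X0 : Matrix (Fin n) (Fin t) ℝ)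
    (Q : Matrix (Fin n) (Fin n) ℝ) (R : Matrix (Fin m) (Fin m) ℝ)
    (L : Matrix (Fin m ⊕ Fin n) (Fin n) ℝ) (Sg : Matrix (Fin n) (Fin n) ℝ) : ℝ :=
  Matrix.trace (Q * Sg) + Matrix.trace (L * Sg⁻¹ * Lᵀ * (Ubar U0 X0)ᵀ * R * Ubar U0 X0)

/-- Feasible set `ℒ` of the convex reparameterization. -/
def repSet (U0 : Matrix (Fin m) (Fin t) ℝ) (X0 X1 : Matrix (Fin n) (Fin t) ℝ) :
    Set (Matrix (Fin m ⊕ Fin n) (Fin n) ℝ × Matrix (Fin n) (Fin n) ℝ) :=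
  {p | p.2.IsSymm ∧ p.2 = Xbar0 U0 X0 * p.1 ∧
    (Matrix.fromBlocks (p.2 - 1) (Xbar1 U0 X0 X1 * p.1)
      ((Xbar1 U0 X0 X1 * p.1)ᵀ) p.2).PosSemidef}

/-- `p(a) = (16a³/(σ̲(Q)²ζ)) (1 + a/σ̲(Q)) (1 + √(a/σ̲(R)))`. -/
def pC (Q : Matrix (Fin n) (Fin n) ℝ) (R : Matrix (Fin m) (Fin m) ℝ) (ζ a : ℝ) : ℝ :=
  16 * a ^ 3 / (sigMin Q ^ 2 * ζ) * (1 + a / sigMin Q) * (1 + Real.sqrt (a / sigMin R))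

/-!
The set `ℒ` is cut out by linear equations and one linear matrix inequality, so it is convex.
In `f`, the term `Tr(QΣ)` is linear and the other term is `Tr(L Σ⁻¹ Lᵀ M)` with
`M = Ū₀ᵀ R Ū₀ ⪰ 0`. By the Schur complement, `L Σ⁻¹ Lᵀ ⪯ Y` iff `[[Σ, Lᵀ], [L, Y]] ⪰ 0`, a
condition jointly convex in `(L, Σ, Y)`. Hence `(L, Σ) ↦ L Σ⁻¹ Lᵀ` is convex for the Loewner
order, and pairing with `M ⪰ 0` under the trace is monotone.
-/

open scoped MatrixOrder

namespace Matrix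

variable {ι κ : Type*} [Fintype ι]

lemma PosSemidef.trace_mul_nonneg [DecidableEq ι] {A B : Matrix ι ι ℝ} (hA : A.PosSemidef)
    (hB : B.PosSemidef) : 0 ≤ (A * B).trace := by
  obtain ⟨C, rfl⟩ := CStarAlgebra.nonneg_iff_eq_star_mul_self.mp hB.nonneg
  rw [← Matrix.mul_assoc, trace_mul_comm, ← Matrix.mul_assoc]
  exact (hA.mul_mul_conjTranspose_same C).trace_nonneg

lemma trace_mul_le_trace_mul_of_le [DecidableEq ι] {A B M : Matrix ι ι ℝ} (hAB : A ≤ B)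
    (hM : M.PosSemidef) : (A * M).trace ≤ (B * M).trace := by
  have := (le_iff.mp hAB).trace_mul_nonneg hM
  rwa [Matrix.sub_mul, trace_sub, sub_nonneg] at this

lemma convex_setOf_posDef : Convex ℝ {S : Matrix κ κ ℝ | S.PosDef} := by
  intro S₁ h₁ S₂ h₂ a b ha hb hab
  rcases ha.lt_or_eq with ha | rfl
  · exact (h₁.smul ha).add_posSemidef (h₂.posSemidef.smul hb)
  · simpa [show b = 1 by linarith] using h₂

variable [Fintype κ] [DecidableEq κ]

lemma posSemidef_fromBlocks_transpose_iff {S : Matrix κ κ ℝ} (hS : S.PosDef)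
    (L : Matrix ι κ ℝ) (Y : Matrix ι ι ℝ) :
    (fromBlocks S Lᵀ L Y).PosSemidef ↔ L * S⁻¹ * Lᵀ ≤ Y := by
  have := hS.isUnit.invertible
  simpa [le_iff] using PosDef.fromBlocks₁₁ Lᵀ Y hS

theorem mul_inv_mul_transpose_combo_le {S₁ S₂ : Matrix κ κ ℝ} (h₁ : S₁.PosDef) (h₂ : S₂.PosDef)
    (L₁ L₂ : Matrix ι κ ℝ) {a b : ℝ} (ha : 0 ≤ a) (hb : 0 ≤ b) (hab : a + b = 1) :
    (a • L₁ + b • L₂) * (a • S₁ + b • S₂)⁻¹ * (a • L₁ + b • L₂)ᵀ ≤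
      a • (L₁ * S₁⁻¹ * L₁ᵀ) + b • (L₂ * S₂⁻¹ * L₂ᵀ) := by
  have hblock (S : Matrix κ κ ℝ) (hS : S.PosDef) (L : Matrix ι κ ℝ) :
      (fromBlocks S Lᵀ L (L * S⁻¹ * Lᵀ)).PosSemidef :=
    (posSemidef_fromBlocks_transpose_iff hS L _).mpr le_rfl
  have hcombo := ((hblock S₁ h₁ L₁).smul ha).add ((hblock S₂ h₂ L₂).smul hb)
  rw [fromBlocks_smul, fromBlocks_smul, fromBlocks_add, ← transpose_smul, ← transpose_smul,
    ← transpose_add] at hcombo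
  exact (posSemidef_fromBlocks_transpose_iff (convex_setOf_posDef h₁ h₂ ha hb hab) _ _).mp hcombo

theorem convexOn_trace_mul_inv_mul_transpose_mul [DecidableEq ι] {M : Matrix ι ι ℝ}
    (hM : M.PosSemidef) :
    ConvexOn ℝ {p : Matrix ι κ ℝ × Matrix κ κ ℝ | p.2.PosDef}
      (fun p => (p.1 * p.2⁻¹ * p.1ᵀ * M).trace) := by
  refine ⟨convex_setOf_posDef.linear_preimage (LinearMap.snd ℝ _ _), ?_⟩
  intro p hp q hq a b ha hb hab
  have := trace_mul_le_trace_mul_of_le (mul_inv_mul_transpose_combo_le hp hq p.1 q.1 ha hb hab) hM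
  simpa [Matrix.add_mul, trace_add] using this

end Matrix

lemma convex_repSet (U0 : Matrix (Fin m) (Fin t) ℝ) (X0 X1 : Matrix (Fin n) (Fin t) ℝ) :
    Convex ℝ (repSet U0 X0 X1) := by
  have hsymm : Convex ℝ {p : Matrix (Fin m ⊕ Fin n) (Fin n) ℝ × Matrix (Fin n) (Fin n) ℝ |
      p.2ᵀ - p.2 = 0} :=
    convex_hyperplane ⟨fun p q => by simp only [Prod.snd_add, transpose_add]; abel,
      fun c p => by simp [smul_sub]⟩ 0
  have hlin : Convex ℝ {p : Matrix (Fin m ⊕ Fin n) (Fin n) ℝ × Matrix (Fin n) (Fin n) ℝ |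
      p.2 - Xbar0 U0 X0 * p.1 = 0} :=
    convex_hyperplane ⟨fun p q => by simp only [Prod.snd_add, Prod.fst_add, Matrix.mul_add]; abel,
      fun c p => by simp [smul_sub]⟩ 0
  have hlmi : Convex ℝ {p : Matrix (Fin m ⊕ Fin n) (Fin n) ℝ × Matrix (Fin n) (Fin n) ℝ |
      fromBlocks 1 0 0 0 ≤ fromBlocks p.2 (Xbar1 U0 X0 X1 * p.1) (Xbar1 U0 X0 X1 * p.1)ᵀ p.2} :=
    convex_halfSpace_ge ⟨fun p q => by simp [Matrix.mul_add, fromBlocks_add],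
      fun c p => by simp [fromBlocks_smul]⟩ _
  convert (hsymm.inter hlin).inter hlmi using 1
  ext p
  simp only [repSet, IsSymm, Set.mem_inter_iff, Set.mem_ofPred_eq, sub_eq_zero, le_iff,
    and_assoc, sub_eq_add_neg (fromBlocks _ _ _ _), fromBlocks_neg, fromBlocks_add, neg_zero,
    add_zero, ← sub_eq_add_neg]

lemma repSet_subset_posDef (U0 : Matrix (Fin m) (Fin t) ℝ) (X0 X1 : Matrix (Fin n) (Fin t) ℝ) :
    repSet U0 X0 X1 ⊆ {p | p.2.PosDef} := by
  rintro p ⟨-, -, hp⟩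
  have h : (p.2 - 1).PosSemidef := toBlocks_fromBlocks₁₁ (p.2 - 1) _ _ p.2 ▸ hp.submatrix Sum.inl
  simpa using PosDef.posSemidef_add h PosDef.one

theorem stmt_8_general {n m t : ℕ}
    (U0 : Matrix (Fin m) (Fin t) ℝ) (X0 X1 : Matrix (Fin n) (Fin t) ℝ)
    (Q : Matrix (Fin n) (Fin n) ℝ) (R : Matrix (Fin m) (Fin m) ℝ)
    (hR : R.PosDef) :
    Convex ℝ (repSet U0 X0 X1) ∧
    ConvexOn ℝ (repSet U0 X0 X1) (fun p => fRep U0 X0 Q R p.1 p.2) := by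
  set M := (Ubar U0 X0)ᵀ * R * Ubar U0 X0
  have hM : M.PosSemidef := by
    simpa using hR.posSemidef.conjTranspose_mul_mul_same (Ubar U0 X0)
  have hconv := convex_repSet U0 X0 X1
  have hlinear := (traceLinearMap (Fin n) ℝ ℝ ∘ₗ LinearMap.mulLeft ℝ Q ∘ₗ
    LinearMap.snd ℝ (Matrix (Fin m ⊕ Fin n) (Fin n) ℝ) _).convexOn hconv
  have hfrac := (convexOn_trace_mul_inv_mul_transpose_mul hM).subset
    (repSet_subset_posDef U0 X0 X1) hconv
  refine ⟨hconv, (hlinear.add hfrac).congr fun p _ => ?_⟩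
  simp [fRep, M, Matrix.mul_assoc]

/-- Convexity of the reparameterized LQR problem (Lemma 10). -/
theorem stmt_8 {n m t : ℕ} (hn : 0 < n) (hm : 0 < m) (ht : 0 < t)
    (U0 : Matrix (Fin m) (Fin t) ℝ) (X0 X1 : Matrix (Fin n) (Fin t) ℝ)
    (Q : Matrix (Fin n) (Fin n) ℝ) (R : Matrix (Fin m) (Fin m) ℝ)
    (hQ : Q.PosDef) (hR : R.PosDef)
    (hrank : (Dmat U0 X0).rank = m + n) :
    Convex ℝ (repSet U0 X0 X1) ∧
    ConvexOn ℝ (repSet U0 X0 X1) (fun p => fRep U0 X0 Q R p.1 p.2) :=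
  stmt_8_general U0 X0 X1 Q R hR
end
end

section
/- Hessian formula for J: for V ∈ S and any direction Z ∈ ℝ^{(m+n)×n}, the second directional derivative of J at V along Z, i.e. (d²/dτ²)J(V + τZ)|_{τ=0}, equals 4·Tr(ZᵀX̄₁ᵀP'[Z]X̄₁VΣ_V) + 2·Tr(Zᵀ(Ū₀ᵀRŪ₀ + X̄₁ᵀP_VX̄₁)ZΣ_V), where E_V := (Ū₀ᵀRŪ₀ + X̄₁ᵀP_VX̄₁)V and P'[Z] := Σ_{i≥0}(VᵀX̄₁ᵀ)ⁱ(ZᵀE_V + E_VᵀZ)(X̄₁V)ⁱ. -/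
open Matrix

noncomputable section

variable {n m t : ℕ}

/-
Along the line `V + τ Z` the closed-loop matrix is `A + τ B` with `A = X̄₁ V`, `B = X̄₁ Z`; as
`ρ(·) < 1` is an open condition (Gelfand's formula), it stays stable for small `τ`. There
`J = Tr P(τ)`, where `P(τ)` solves the Stein equation `L_τ P(τ) = G(τ)`,
`L_τ X = X - (A + τ B)ᵀ X (A + τ B)`, and `L_τ = L₀ + τ L₁ + τ² L₂`,
`G(τ) = G₀ + τ G₁ + τ² G₂` are quadratic in `τ`. Differentiating `L_τ P(τ) = G(τ)` twice gives
`P''(0) = 2 L₀⁻¹ (G₂ - L₂ P(0) - L₁ P'(0))`, where `P(0) = P_V` and `P'(0) = P'[Z]`; the duality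
`Tr (L₀⁻¹ X) = Tr (X Σ_V)` and the symmetry of `P'[Z]` and `Σ_V` turn its trace into the formula.
-/

open Filter Topology

theorem Ring.inverse_one_sub_eq_tsum {α : Type*} [Ring α] [TopologicalSpace α]
    [IsTopologicalRing α] [T2Space α] {x : α} (h : Summable (x ^ ·)) :
    IsUnit (1 - x) ∧ Ring.inverse (1 - x) = ∑' k, x ^ k := by
  let u : αˣ := ⟨1 - x, ∑' k, x ^ k, h.one_sub_mul_tsum_pow, h.tsum_pow_mul_one_sub⟩
  exact ⟨u.isUnit, Ring.inverse_unit u⟩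

theorem ContinuousLinearMap.mulLeftRight_pow {𝕜 R : Type*} [NontriviallyNormedField 𝕜]
    [SeminormedRing R] [NormedAlgebra 𝕜 R] (a b : R) (k : ℕ) :
    mulLeftRight 𝕜 R a b ^ k = mulLeftRight 𝕜 R (a ^ k) (b ^ k) := by
  induction k with
  | zero => ext; simp
  | succ k ih =>
    ext x
    rw [pow_succ, mul_apply_eq_comp, ih]
    simp only [mulLeftRight_apply, pow_succ a, pow_succ' b, mul_assoc]

section SecondDerivative

variable {E F : Type*} [NormedAddCommGroup E] [NormedSpace ℝ E] [CompleteSpace E]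
  [NormedAddCommGroup F] [NormedSpace ℝ F]

theorem iteratedDeriv_two_eq_of_eventually_hasDerivAt {f f' : ℝ → F} {x : ℝ} {y : F}
    (hf : ∀ᶠ τ in 𝓝 x, HasDerivAt f (f' τ) τ) (hf' : HasDerivAt f' y x) :
    iteratedDeriv 2 f x = y := by
  have hderiv : deriv f =ᶠ[𝓝 x] f' := hf.mono fun τ hτ => hτ.deriv
  rw [iteratedDeriv_succ, iteratedDeriv_one, hderiv.deriv_eq, hf'.deriv]

theorem hasDerivAt_quadratic (a b c : F) (τ : ℝ) :
    HasDerivAt (fun s : ℝ => a + s • b + s ^ 2 • c) (b + (2 * τ) • c) τ := by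
  have h := (((hasDerivAt_id τ).smul_const b).add ((hasDerivAt_pow 2 τ).smul_const c)).const_add a
  simpa [add_assoc] using h

theorem hasDerivAt_ringInverse_apply {L : ℝ → E →L[ℝ] E} {G : ℝ → E} {L' : E →L[ℝ] E}
    {G' : E} {τ : ℝ} (hL : HasDerivAt L L' τ) (hG : HasDerivAt G G' τ) (hu : IsUnit (L τ)) :
    HasDerivAt (fun s => Ring.inverse (L s) (G s))
      (Ring.inverse (L τ) (G' - L' (Ring.inverse (L τ) (G τ)))) τ := by
  obtain ⟨u, hu⟩ := hu
  have hinv : HasFDerivAt Ring.inverse _ (L τ) := hu ▸ hasFDerivAt_ringInverse (𝕜 := ℝ) u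
  have h := (hinv.comp_hasDerivAt τ hL).clm_apply hG
  refine h.congr_deriv ?_
  rw [Function.comp_apply, ← hu, Ring.inverse_unit]
  simp only [_root_.neg_apply, ContinuousLinearMap.mulLeftRight_apply, mul_apply_eq_comp,
    map_sub]
  abel

theorem iteratedDeriv_two_inverse_apply_quadratic (ℓ : E →L[ℝ] F) (L₀ L₁ L₂ : E →L[ℝ] E)
    (G₀ G₁ G₂ : E) (hL₀ : IsUnit L₀) :
    iteratedDeriv 2 (fun τ : ℝ =>
        ℓ (Ring.inverse (L₀ + τ • L₁ + τ ^ 2 • L₂) (G₀ + τ • G₁ + τ ^ 2 • G₂))) 0 =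
      (2 : ℝ) • ℓ (Ring.inverse L₀ (G₂ - L₂ (Ring.inverse L₀ G₀) -
        L₁ (Ring.inverse L₀ (G₁ - L₁ (Ring.inverse L₀ G₀))))) := by
  set L : ℝ → E →L[ℝ] E := fun τ => L₀ + τ • L₁ + τ ^ 2 • L₂
  set G : ℝ → E := fun τ => G₀ + τ • G₁ + τ ^ 2 • G₂
  have hL : ∀ τ, HasDerivAt L (L₁ + (2 * τ) • L₂) τ := hasDerivAt_quadratic L₀ L₁ L₂
  have hG : ∀ τ, HasDerivAt G (G₁ + (2 * τ) • G₂) τ := hasDerivAt_quadratic G₀ G₁ G₂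
  have hL0 : L 0 = L₀ := by simp [L]
  have hunits : ∀ᶠ τ in 𝓝 0, IsUnit (L τ) :=
    (hL 0).continuousAt.eventually (Units.isOpen.mem_nhds (hL0 ▸ hL₀))
  -- `F' = L⁻¹ H` has the shape of `F`, so `hasDerivAt_ringInverse_apply` differentiates it again
  set F : ℝ → E := fun τ => Ring.inverse (L τ) (G τ)
  set H : ℝ → E := fun τ => G₁ + (2 * τ) • G₂ - (L₁ + (2 * τ) • L₂) (F τ)
  have hF : ∀ᶠ τ in 𝓝 0, HasDerivAt F (Ring.inverse (L τ) (H τ)) τ :=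
    hunits.mono fun τ hτ => hasDerivAt_ringInverse_apply (hL τ) (hG τ) hτ
  have hG' : HasDerivAt (fun τ : ℝ => G₁ + (2 * τ) • G₂) ((2 : ℝ) • G₂) 0 := by
    simpa using (((hasDerivAt_id (0 : ℝ)).const_mul 2).smul_const G₂).const_add G₁
  have hL' : HasDerivAt (fun τ : ℝ => L₁ + (2 * τ) • L₂) ((2 : ℝ) • L₂) 0 := by
    simpa using (((hasDerivAt_id (0 : ℝ)).const_mul 2).smul_const L₂).const_add L₁
  have hH : HasDerivAt H ((2 : ℝ) • G₂ - (((2 : ℝ) • L₂) (F 0) +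
      (L₁ + (2 * 0 : ℝ) • L₂) (Ring.inverse L₀ (H 0)))) 0 := by
    have hF0 := hF.self_of_nhds
    rw [hL0] at hF0
    exact hG'.sub (hL'.clm_apply hF0)
  have hF' := hasDerivAt_ringInverse_apply (hL 0) hH (hL0 ▸ hL₀)
  refine iteratedDeriv_two_eq_of_eventually_hasDerivAt
    (hF.mono fun τ hτ => ℓ.hasFDerivAt.comp_hasDerivAt τ hτ)
    ((ℓ.hasFDerivAt.comp_hasDerivAt 0 hF').congr_deriv ?_)
  rw [← map_smul]
  congr 1
  have hG0 : G 0 = G₀ := by simp [G]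
  simp only [H, F, hL0, hG0, mul_zero, zero_smul, add_zero, _root_.smul_apply, map_sub, map_add,
    map_smul]
  module

end SecondDerivative

section FrobeniusNorm

attribute [local instance] Matrix.frobeniusNormedAddCommGroup Matrix.frobeniusNormedSpace
  Matrix.frobeniusNormedRing Matrix.frobeniusNormedAlgebra

variable {ι : Type*} [Fintype ι] [DecidableEq ι]

theorem Matrix.frobenius_nnnorm_map_ofReal (A : Matrix ι ι ℝ) :
    ‖A.map Complex.ofReal‖₊ = ‖A‖₊ :=
  Matrix.frobenius_nnnorm_map_eq A _ fun a => by simp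

theorem Matrix.frobenius_nnnorm_map_ofReal_pow (A : Matrix ι ι ℝ) (k : ℕ) :
    ‖A.map Complex.ofReal ^ k‖₊ = ‖A ^ k‖₊ := by
  rw [← Matrix.frobenius_nnnorm_map_ofReal]
  exact congrArg _ (Complex.ofRealHom.mapMatrix.map_pow A k).symm

theorem specLt1.exists_eventually_norm_pow_le {A : Matrix ι ι ℝ} (hA : specLt1 A) :
    ∃ c : ℝ, 0 ≤ c ∧ c < 1 ∧ ∀ᶠ k in atTop, ‖A ^ k‖ ≤ c ^ k := by
  obtain ⟨c, hρc, hc1⟩ := ENNReal.lt_iff_exists_nnreal_btwn.mp hA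
  have hgelfand := spectrum.pow_nnnorm_pow_one_div_tendsto_nhds_spectralRadius
    (A.map Complex.ofReal)
  refine ⟨c, c.2, by exact_mod_cast hc1, ?_⟩
  filter_upwards [hgelfand.eventually_lt_const hρc, eventually_ge_atTop 1] with k hk hk1
  have hk0 : (0 : ℝ) < k := by exact_mod_cast hk1
  rw [Matrix.frobenius_nnnorm_map_ofReal_pow, one_div, ENNReal.rpow_inv_lt_iff hk0,
    ENNReal.rpow_natCast] at hk
  exact_mod_cast hk.le

theorem isOpen_setOf_specLt1 : IsOpen {A : Matrix ι ι ℝ | specLt1 A} := by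
  refine isOpen_iff_mem_nhds.mpr fun A hA => ?_
  obtain ⟨c, hc0, hc1, hAc⟩ := specLt1.exists_eventually_norm_pow_le hA
  have hsmall : ∀ᶠ k in atTop, ‖A ^ k‖ * ‖(1 : Matrix ι ι ℝ)‖ < 1 := by
    have h := ((tendsto_pow_atTop_nhds_zero_of_lt_one hc0 hc1).mul_const
      ‖(1 : Matrix ι ι ℝ)‖).eventually_lt_const (by simp : (0 : ℝ) * _ < 1)
    filter_upwards [h, hAc] with k hk hAk
    exact lt_of_le_of_lt (by gcongr) hk
  obtain ⟨j, hj⟩ := (hsmall.and (eventually_ge_atTop 1)).exists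
  obtain ⟨k, rfl⟩ : ∃ k, j = k + 1 := ⟨j - 1, by omega⟩
  -- `ρ(M) ^ (k + 1) ≤ ‖M ^ (k + 1)‖ * ‖1‖`, and the Frobenius norm of `1` is not `1`
  have hopen : IsOpen {M : Matrix ι ι ℝ | ‖M ^ (k + 1)‖ * ‖(1 : Matrix ι ι ℝ)‖ < 1} :=
    isOpen_lt ((continuous_pow (k + 1)).norm.mul continuous_const) continuous_const
  refine Filter.mem_of_superset (hopen.mem_nhds hj.1) fun M hM => ?_
  have hρ := spectrum.spectralRadius_le_pow_nnnorm_pow_one_div ℂ (M.map Complex.ofReal) k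
  rw [← ENNReal.mul_rpow_of_nonneg _ _ (by positivity), ← ENNReal.coe_mul,
    Matrix.frobenius_nnnorm_map_ofReal_pow, ← Matrix.map_one Complex.ofReal (by simp) (by simp),
    Matrix.frobenius_nnnorm_map_ofReal] at hρ
  refine hρ.trans_lt (ENNReal.rpow_lt_one ?_ (by positivity))
  exact_mod_cast hM

theorem specLt1.summable_norm_pow_sq {A : Matrix ι ι ℝ} (hA : specLt1 A) :
    Summable fun k => ‖A ^ k‖ ^ 2 := by
  obtain ⟨c, hc0, hc1, hAc⟩ := specLt1.exists_eventually_norm_pow_le hA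
  refine .of_norm_bounded_eventually_nat
    (summable_geometric_of_lt_one (by positivity) (pow_lt_one₀ hc0 hc1 two_ne_zero)) ?_
  filter_upwards [hAc] with k hk
  rw [Real.norm_of_nonneg (by positivity), ← pow_mul, mul_comm, pow_mul]
  gcongr

/-- The topology of the Frobenius norm; preferring it to the product topology makes the
continuous linear maps between matrices a normed algebra. -/
abbrev frobeniusTopology {ι κ : Type*} [Fintype ι] [Fintype κ] : TopologicalSpace (Matrix ι κ ℝ) :=
  PseudoMetricSpace.toUniformSpace.toTopologicalSpace

attribute [local instance high] frobeniusTopology in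
def steinOp (A : Matrix ι ι ℝ) : Matrix ι ι ℝ →L[ℝ] Matrix ι ι ℝ :=
  1 - ContinuousLinearMap.mulLeftRight ℝ _ Aᵀ A

theorem steinOp_add_smul (A B : Matrix ι ι ℝ) (τ : ℝ) :
    steinOp (A + τ • B) = steinOp A +
      τ • -(ContinuousLinearMap.mulLeftRight ℝ _ Bᵀ A + ContinuousLinearMap.mulLeftRight ℝ _ Aᵀ B) +
      τ ^ 2 • -ContinuousLinearMap.mulLeftRight ℝ _ Bᵀ B := by
  ext1 X
  simp only [steinOp, transpose_add, transpose_smul, _root_.add_apply,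
    _root_.sub_apply, _root_.smul_apply, _root_.neg_apply,
    ContinuousLinearMap.mulLeftRight_apply, one_apply_eq_self, Matrix.add_mul,
    Matrix.mul_add, Matrix.smul_mul, Matrix.mul_smul, smul_add]
  module

variable {A : Matrix ι ι ℝ}

theorem specLt1.summable_pow_mulLeftRight (hA : specLt1 A) :
    Summable fun k => ContinuousLinearMap.mulLeftRight ℝ (Matrix ι ι ℝ) Aᵀ A ^ k := by
  refine .of_norm_bounded hA.summable_norm_pow_sq fun k => ?_
  rw [ContinuousLinearMap.mulLeftRight_pow, ← transpose_pow, sq]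
  refine (ContinuousLinearMap.opNorm_mulLeftRight_apply_apply_le ℝ _ _ _).trans_eq ?_
  rw [Matrix.frobenius_norm_transpose]

theorem specLt1.isUnit_steinOp (hA : specLt1 A) : IsUnit (steinOp A) :=
  (Ring.inverse_one_sub_eq_tsum hA.summable_pow_mulLeftRight).1

theorem specLt1.hasSum_inverse_steinOp_apply (hA : specLt1 A) (X : Matrix ι ι ℝ) :
    HasSum (fun k => (Aᵀ) ^ k * X * A ^ k) (Ring.inverse (steinOp A) X) := by
  rw [steinOp, (Ring.inverse_one_sub_eq_tsum hA.summable_pow_mulLeftRight).2]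
  refine (hA.summable_pow_mulLeftRight.hasSum.mapL (ContinuousLinearMap.apply ℝ _ X)).congr_fun
    fun k => ?_
  simp [ContinuousLinearMap.mulLeftRight_pow]

theorem specLt1.transpose_inverse_steinOp_apply (hA : specLt1 A) (X : Matrix ι ι ℝ) :
    (Ring.inverse (steinOp A) X)ᵀ = Ring.inverse (steinOp A) Xᵀ := by
  refine ((hA.hasSum_inverse_steinOp_apply X).mapL
    (Matrix.transposeLinearEquiv ι ι ℝ ℝ).toLinearMap.toContinuousLinearMap).unique ?_
  simpa [transpose_mul, Matrix.mul_assoc] using hA.hasSum_inverse_steinOp_apply Xᵀ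

theorem specLt1.hasSum_lyap {k : ℕ} {A : Matrix (Fin k) (Fin k) ℝ} (hA : specLt1 A) :
    HasSum (fun i => A ^ i * (Aᵀ) ^ i) (lyap A) := by
  refine (Summable.of_norm_bounded hA.summable_norm_pow_sq fun i => ?_).hasSum
  refine (norm_mul_le _ _).trans_eq ?_
  rw [← transpose_pow, Matrix.frobenius_norm_transpose, sq]

theorem specLt1.lyap_transpose {k : ℕ} {A : Matrix (Fin k) (Fin k) ℝ} (hA : specLt1 A) :
    (lyap A)ᵀ = lyap A := by
  refine hA.hasSum_lyap.matrix_transpose.unique ?_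
  simpa only [transpose_mul, transpose_pow, transpose_transpose] using hA.hasSum_lyap

theorem specLt1.trace_inverse_steinOp_apply {k : ℕ} {A : Matrix (Fin k) (Fin k) ℝ}
    (hA : specLt1 A) (X : Matrix (Fin k) (Fin k) ℝ) :
    trace (Ring.inverse (steinOp A) X) = trace (X * lyap A) := by
  let traceCLM := (Matrix.traceLinearMap (Fin k) ℝ ℝ).toContinuousLinearMap
  refine ((hA.hasSum_inverse_steinOp_apply X).mapL traceCLM).unique ?_
  have h := (hA.hasSum_lyap.mapL (ContinuousLinearMap.mul ℝ _ X)).mapL traceCLM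
  refine h.congr_fun fun i => ?_
  simp only [traceCLM, LinearMap.coe_toContinuousLinearMap', traceLinearMap_apply,
    ContinuousLinearMap.mul_apply', ← Matrix.mul_assoc]
  rw [trace_mul_cycle, trace_mul_comm, Matrix.mul_assoc]

theorem iteratedDeriv_two_trace_inverse_steinOp_add_smul {k : ℕ} {A : Matrix (Fin k) (Fin k) ℝ}
    (hA : specLt1 A) (B G₀ G₁ G₂ : Matrix (Fin k) (Fin k) ℝ) :
    let P₀ := Ring.inverse (steinOp A) G₀
    let P₁ := Ring.inverse (steinOp A) (G₁ + Bᵀ * P₀ * A + Aᵀ * P₀ * B)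
    iteratedDeriv 2 (fun τ : ℝ =>
        trace (Ring.inverse (steinOp (A + τ • B)) (G₀ + τ • G₁ + τ ^ 2 • G₂))) 0 =
      2 * trace ((G₂ + Bᵀ * P₀ * B + Bᵀ * P₁ * A + Aᵀ * P₁ * B) * lyap A) := by
  intro P₀ P₁
  have h := iteratedDeriv_two_inverse_apply_quadratic
    (traceLinearMap (Fin k) ℝ ℝ).toContinuousLinearMap (steinOp A)
    (-(ContinuousLinearMap.mulLeftRight ℝ _ Bᵀ A + ContinuousLinearMap.mulLeftRight ℝ _ Aᵀ B))
    (-ContinuousLinearMap.mulLeftRight ℝ _ Bᵀ B) G₀ G₁ G₂ hA.isUnit_steinOp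
  simp only [_root_.neg_apply, _root_.add_apply, ContinuousLinearMap.mulLeftRight_apply,
    sub_neg_eq_add, smul_eq_mul] at h
  simp only [steinOp_add_smul]
  refine h.trans ?_
  rw [← hA.trace_inverse_steinOp_apply]
  simp only [P₁, P₀, add_assoc]
  rfl

theorem specLt1.trace_mul_lyap_swap {k : ℕ} {A : Matrix (Fin k) (Fin k) ℝ} (hA : specLt1 A)
    {P : Matrix (Fin k) (Fin k) ℝ} (hP : Pᵀ = P) (B : Matrix (Fin k) (Fin k) ℝ) :
    trace (Aᵀ * P * B * lyap A) = trace (Bᵀ * P * A * lyap A) := by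
  rw [← trace_transpose]
  simp only [transpose_mul, transpose_transpose, hP, hA.lyap_transpose]
  rw [trace_mul_comm]
  simp only [Matrix.mul_assoc]

theorem transpose_add_smul_mul_mul_add_smul {κ ν : Type*} [Fintype κ] (V Z : Matrix κ ν ℝ)
    (M : Matrix κ κ ℝ) (τ : ℝ) :
    (V + τ • Z)ᵀ * M * (V + τ • Z) =
      Vᵀ * M * V + τ • (Zᵀ * M * V + Vᵀ * M * Z) + τ ^ 2 • (Zᵀ * M * Z) := by
  simp only [transpose_add, transpose_smul, Matrix.add_mul, Matrix.mul_add, Matrix.smul_mul,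
    Matrix.mul_smul, smul_add, smul_smul, sq]
  abel

variable (U0 : Matrix (Fin m) (Fin t) ℝ) (X0 X1 : Matrix (Fin n) (Fin t) ℝ)
  (Q : Matrix (Fin n) (Fin n) ℝ) (R : Matrix (Fin m) (Fin m) ℝ)
  {V : Matrix (Fin m ⊕ Fin n) (Fin n) ℝ}

theorem PV_eq_inverse_steinOp (hV : specLt1 (Xbar1 U0 X0 X1 * V)) :
    PV U0 X0 X1 Q R V = Ring.inverse (steinOp (Xbar1 U0 X0 X1 * V))
      (Q + Vᵀ * (Ubar U0 X0)ᵀ * R * Ubar U0 X0 * V) :=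
  (hV.hasSum_inverse_steinOp_apply _).tsum_eq

theorem Jcost_eq_trace_PV (hV : specLt1 (Xbar1 U0 X0 X1 * V)) :
    Jcost U0 X0 X1 Q R V = trace (PV U0 X0 X1 Q R V) := by
  rw [PV_eq_inverse_steinOp U0 X0 X1 Q R hV, hV.trace_inverse_steinOp_apply]
  rfl

theorem PV_transpose (hQ : Qᵀ = Q) (hR : Rᵀ = R) (hV : specLt1 (Xbar1 U0 X0 X1 * V)) :
    (PV U0 X0 X1 Q R V)ᵀ = PV U0 X0 X1 Q R V := by
  rw [PV_eq_inverse_steinOp U0 X0 X1 Q R hV, hV.transpose_inverse_steinOp_apply]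
  simp [transpose_mul, hQ, hR, Matrix.mul_assoc]

theorem Jcost_add_smul_eventuallyEq (Z : Matrix (Fin m ⊕ Fin n) (Fin n) ℝ)
    (hV : specLt1 (Xbar1 U0 X0 X1 * V)) :
    (fun τ : ℝ => Jcost U0 X0 X1 Q R (V + τ • Z)) =ᶠ[𝓝 0] fun τ => trace (Ring.inverse
      (steinOp (Xbar1 U0 X0 X1 * V + τ • (Xbar1 U0 X0 X1 * Z)))
      (Q + Vᵀ * ((Ubar U0 X0)ᵀ * R * Ubar U0 X0) * V +
        τ • (Zᵀ * ((Ubar U0 X0)ᵀ * R * Ubar U0 X0) * V +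
          Vᵀ * ((Ubar U0 X0)ᵀ * R * Ubar U0 X0) * Z) +
        τ ^ 2 • (Zᵀ * ((Ubar U0 X0)ᵀ * R * Ubar U0 X0) * Z))) := by
  have hcont : Continuous fun τ : ℝ => Xbar1 U0 X0 X1 * (V + τ • Z) := by fun_prop
  filter_upwards [hcont.continuousAt.preimage_mem_nhds
    (isOpen_setOf_specLt1.mem_nhds (by simpa using hV))] with τ hτ
  rw [Jcost_eq_trace_PV U0 X0 X1 Q R hτ, PV_eq_inverse_steinOp U0 X0 X1 Q R hτ, add_assoc Q,
    add_assoc Q, ← transpose_add_smul_mul_mul_add_smul, Matrix.mul_add, Matrix.mul_smul]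
  simp only [Matrix.mul_assoc]

theorem iteratedDeriv_two_Jcost_add_smul (hQ : Qᵀ = Q) (hR : Rᵀ = R)
    (hV : specLt1 (Xbar1 U0 X0 X1 * V)) (Z EV : Matrix (Fin m ⊕ Fin n) (Fin n) ℝ)
    (hEV : EV = ((Ubar U0 X0)ᵀ * R * Ubar U0 X0 +
        (Xbar1 U0 X0 X1)ᵀ * PV U0 X0 X1 Q R V * Xbar1 U0 X0 X1) * V)
    (P' : Matrix (Fin n) (Fin n) ℝ)
    (hP' : P' = Ring.inverse (steinOp (Xbar1 U0 X0 X1 * V)) (Zᵀ * EV + EVᵀ * Z)) :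
    iteratedDeriv 2 (fun τ : ℝ => Jcost U0 X0 X1 Q R (V + τ • Z)) 0 =
      4 * trace (Zᵀ * (Xbar1 U0 X0 X1)ᵀ * P' * Xbar1 U0 X0 X1 * V * SigV U0 X0 X1 V) +
      2 * trace (Zᵀ * ((Ubar U0 X0)ᵀ * R * Ubar U0 X0 +
          (Xbar1 U0 X0 X1)ᵀ * PV U0 X0 X1 Q R V * Xbar1 U0 X0 X1) * Z * SigV U0 X0 X1 V) := by
  have hP : Ring.inverse (steinOp (Xbar1 U0 X0 X1 * V))
      (Q + Vᵀ * ((Ubar U0 X0)ᵀ * R * Ubar U0 X0) * V) = PV U0 X0 X1 Q R V := by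
    rw [PV_eq_inverse_steinOp U0 X0 X1 Q R hV]
    simp only [Matrix.mul_assoc]
  have hPT := PV_transpose U0 X0 X1 Q R hQ hR hV
  rw [(Jcost_add_smul_eventuallyEq U0 X0 X1 Q R Z hV).iteratedDeriv_eq 2,
    iteratedDeriv_two_trace_inverse_steinOp_add_smul hV]
  simp only [hP]
  set F := Xbar1 U0 X0 X1
  set M := (Ubar U0 X0)ᵀ * R * Ubar U0 X0
  set P := PV U0 X0 X1 Q R V
  have hMT : Mᵀ = M := by simp [M, transpose_mul, hR, Matrix.mul_assoc]
  -- the first-order term is `Zᵀ E + Eᵀ Z`, so its Stein inverse is `P'`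
  have hY : Zᵀ * M * V + Vᵀ * M * Z + (F * Z)ᵀ * P * (F * V) + (F * V)ᵀ * P * (F * Z) =
      Zᵀ * EV + EVᵀ * Z := by
    simp only [hEV, transpose_mul, transpose_add, hMT, hPT, Matrix.mul_add, Matrix.add_mul,
      Matrix.mul_assoc]
    abel
  have hP'T : P'ᵀ = P' := by
    rw [hP', hV.transpose_inverse_steinOp_apply, transpose_add, transpose_mul, transpose_mul,
      transpose_transpose, transpose_transpose, add_comm]
  rw [hY, ← hP']
  simp only [Matrix.add_mul, trace_add, hV.trace_mul_lyap_swap hP'T, SigV]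
  simp only [transpose_mul, Matrix.mul_add, Matrix.add_mul, trace_add, Matrix.mul_assoc]
  ring

end FrobeniusNorm

theorem stmt_10_general {n m t : ℕ}
    (U0 : Matrix (Fin m) (Fin t) ℝ) (X0 X1 : Matrix (Fin n) (Fin t) ℝ)
    (Q : Matrix (Fin n) (Fin n) ℝ) (R : Matrix (Fin m) (Fin m) ℝ)
    (hQ : Q.PosDef) (hR : R.PosDef)
    (V : Matrix (Fin m ⊕ Fin n) (Fin n) ℝ) (hV : V ∈ feasSet U0 X0 X1)
    (Z : Matrix (Fin m ⊕ Fin n) (Fin n) ℝ)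
    (EV : Matrix (Fin m ⊕ Fin n) (Fin n) ℝ)
    (hEV : EV = ((Ubar U0 X0)ᵀ * R * Ubar U0 X0 +
        (Xbar1 U0 X0 X1)ᵀ * PV U0 X0 X1 Q R V * Xbar1 U0 X0 X1) * V)
    (P' : Matrix (Fin n) (Fin n) ℝ)
    (hP' : P' = ∑' i : ℕ, ((Xbar1 U0 X0 X1 * V)ᵀ) ^ i * (Zᵀ * EV + EVᵀ * Z) *
        (Xbar1 U0 X0 X1 * V) ^ i) :
    iteratedDeriv 2 (fun τ : ℝ => Jcost U0 X0 X1 Q R (V + τ • Z)) 0 =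
      4 * Matrix.trace (Zᵀ * (Xbar1 U0 X0 X1)ᵀ * P' * Xbar1 U0 X0 X1 * V * SigV U0 X0 X1 V) +
      2 * Matrix.trace (Zᵀ * ((Ubar U0 X0)ᵀ * R * Ubar U0 X0 +
          (Xbar1 U0 X0 X1)ᵀ * PV U0 X0 X1 Q R V * Xbar1 U0 X0 X1) * Z * SigV U0 X0 X1 V) := by
  have hA : specLt1 (Xbar1 U0 X0 X1 * V) := hV.2
  exact iteratedDeriv_two_Jcost_add_smul U0 X0 X1 Q R (by simpa using hQ.1.eq)
    (by simpa using hR.1.eq) hA Z EV hEV P' (hP'.trans (hA.hasSum_inverse_steinOp_apply _).tsum_eq)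

/-- Hessian formula for `J` (Lemma 12). -/
theorem stmt_10 {n m t : ℕ} (hn : 0 < n) (hm : 0 < m) (ht : 0 < t)
    (U0 : Matrix (Fin m) (Fin t) ℝ) (X0 X1 : Matrix (Fin n) (Fin t) ℝ)
    (Q : Matrix (Fin n) (Fin n) ℝ) (R : Matrix (Fin m) (Fin m) ℝ)
    (hQ : Q.PosDef) (hR : R.PosDef)
    (hrank : (Dmat U0 X0).rank = m + n)
    (V : Matrix (Fin m ⊕ Fin n) (Fin n) ℝ) (hV : V ∈ feasSet U0 X0 X1)
    (Z : Matrix (Fin m ⊕ Fin n) (Fin n) ℝ)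
    (EV : Matrix (Fin m ⊕ Fin n) (Fin n) ℝ)
    (hEV : EV = ((Ubar U0 X0)ᵀ * R * Ubar U0 X0 +
        (Xbar1 U0 X0 X1)ᵀ * PV U0 X0 X1 Q R V * Xbar1 U0 X0 X1) * V)
    (P' : Matrix (Fin n) (Fin n) ℝ)
    (hP' : P' = ∑' i : ℕ, ((Xbar1 U0 X0 X1 * V)ᵀ) ^ i * (Zᵀ * EV + EVᵀ * Z) *
        (Xbar1 U0 X0 X1 * V) ^ i) :
    iteratedDeriv 2 (fun τ : ℝ => Jcost U0 X0 X1 Q R (V + τ • Z)) 0 =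
      4 * Matrix.trace (Zᵀ * (Xbar1 U0 X0 X1)ᵀ * P' * Xbar1 U0 X0 X1 * V * SigV U0 X0 X1 V) +
      2 * Matrix.trace (Zᵀ * ((Ubar U0 X0)ᵀ * R * Ubar U0 X0 +
          (Xbar1 U0 X0 X1)ᵀ * PV U0 X0 X1 Q R V * Xbar1 U0 X0 X1) * Z * SigV U0 X0 X1 V) :=
  stmt_10_general U0 X0 X1 Q R hQ hR V hV Z EV hEV P' hP'
end
end
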